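/- For n = m, there is no Lie subsuperalgebra L of gl(n|n) such that the restriction of the adjoint map ad to L is a Lie superalgebra isomorphism onto the Lie superalgebra of all graded derivations of M(n|n). -/

import Mathlib

/-!
Surjectivity of `ad` onto the graded derivations yields, for the odd involution
`J = [[0, 1], [1, 0]]`, some odd `E ∈ L` with `ad E = ad J`; since `ad` is injective on odd
matrices, `E = J`. Then `[J, J] = 2 J² = 2 • 1` lies in `L`, but scalars lie in the kernel of
`ad`, so `ad (2 • 1) = ad 0` contradicts the injectivity of `ad` on `L`.
-/

noncomputable section

/-- The `ℤ₂`-graded algebra `M(n|m)` of complex `(n+m)×(n+m)` matrices. -/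
abbrev GMat (n m : ℕ) := Matrix (Fin (n + m)) (Fin (n + m)) ℂ

/-- The "body" matrix algebra `M_{max n m}(ℂ)`. -/
abbrev BMat (n m : ℕ) := Matrix (Fin (max n m)) (Fin (max n m)) ℂ

namespace GMat

/-- Block degree of an index: `false` for the first (size `n`) block. -/
def bdeg (n m : ℕ) (i : Fin (n + m)) : Bool := decide (n ≤ i.val)

/-- `M` is homogeneous of degree `ε` (block-diagonal for `ε = false`,
block-off-diagonal for `ε = true`). -/
def IsHomog (n m : ℕ) (ε : Bool) (M : GMat n m) : Prop :=
  ∀ i j, Bool.xor (bdeg n m i) (bdeg n m j) ≠ ε → M i j = 0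

/-- The Koszul sign `(-1)^{ab}`. -/
def sgn (a b : Bool) : ℂ := if a && b then -1 else 1

/-- Graded commutator of homogeneous elements of degrees `a`, `b`. -/
def gcomm {n m : ℕ} (a b : Bool) (A B : GMat n m) : GMat n m := A * B - sgn a b • (B * A)

/-- Graded anticommutator of homogeneous elements of degrees `a`, `b`. -/
def gacomm {n m : ℕ} (a b : Bool) (A B : GMat n m) : GMat n m := A * B + sgn a b • (B * A)

/-- The grading matrix `Γ = diag(1_n, -1_m)`. -/
def Gamma (n m : ℕ) : GMat n m := Matrix.diagonal fun i => if bdeg n m i then -1 else 1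

/-- `D` is a graded derivation of `M(n|m)` of degree `ε`. -/
def IsGDer (n m : ℕ) (ε : Bool) (D : GMat n m → GMat n m) : Prop :=
  (∀ A B, D (A + B) = D A + D B) ∧
  (∀ (c : ℂ) A, D (c • A) = c • D A) ∧
  (∀ (a : Bool) M, IsHomog n m a M → IsHomog n m (Bool.xor a ε) (D M)) ∧
  (∀ (a : Bool) (M M' : GMat n m), IsHomog n m a M →
    D (M * M') = D M * M' + sgn ε a • (M * D M'))

/-- The graded adjoint action `ad E` of a homogeneous matrix `E` of degree `a`:
on homogeneous `M` it is the graded commutator `[E,M]_g`. -/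
def gad (n m : ℕ) (a : Bool) (E : GMat n m) : GMat n m → GMat n m :=
  fun M => E * M - (if a then Gamma n m * M * Gamma n m * E else M * E)

/-- The supertrace `str M = Tr M₁ - Tr M₄`. -/
def str (n m : ℕ) (M : GMat n m) : ℂ :=
  ∑ i, (if bdeg n m i then (-1 : ℂ) else 1) * M i i

end GMat



namespace GMat

/-- Even part of a matrix. -/
def evp (n m : ℕ) (A : GMat n m) : GMat n m :=
  ((1 : ℂ)/2) • (A + Gamma n m * A * Gamma n m)

/-- Odd part of a matrix. -/
def odp (n m : ℕ) (A : GMat n m) : GMat n m :=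
  ((1 : ℂ)/2) • (A - Gamma n m * A * Gamma n m)

/-- The super-adjoint action of an arbitrary matrix `A`. -/
def adFull (n m : ℕ) (A : GMat n m) : GMat n m → GMat n m :=
  fun M => gad n m false (evp n m A) M + gad n m true (odp n m A) M

end GMat

namespace GMat

variable {n m : ℕ}

lemma bdeg_castAdd (i : Fin n) : bdeg n m (Fin.castAdd m i) = false := by
  simp [bdeg]

lemma bdeg_natAdd (j : Fin m) : bdeg n m (Fin.natAdd n j) = true := by
  simp [bdeg]

lemma Gamma_mul_self : Gamma n m * Gamma n m = 1 := by
  rw [Gamma, Matrix.diagonal_mul_diagonal, ← Matrix.diagonal_one]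
  congr 1
  funext i
  split <;> norm_num

lemma Gamma_mul_mul_Gamma (A B : GMat n m) :
    Gamma n m * (A * B) * Gamma n m =
      (Gamma n m * A * Gamma n m) * (Gamma n m * B * Gamma n m) := by
  calc Gamma n m * (A * B) * Gamma n m
      = Gamma n m * A * (Gamma n m * Gamma n m) * B * Gamma n m := by
        rw [Gamma_mul_self]; noncomm_ring
    _ = _ := by noncomm_ring

lemma IsHomog.Gamma_conj {a : Bool} {M : GMat n m} (h : IsHomog n m a M) :
    Gamma n m * M * Gamma n m = (if a then (-1 : ℂ) else 1) • M := by
  ext i j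
  by_cases hM : M i j = 0
  · simp [Gamma, Matrix.mul_diagonal, Matrix.diagonal_mul, hM]
  · have hx : Bool.xor (bdeg n m i) (bdeg n m j) = a := by
      by_contra hc; exact hM (h i j hc)
    simp only [Gamma, Matrix.mul_diagonal, Matrix.diagonal_mul, Matrix.smul_apply, smul_eq_mul]
    cases hbi : bdeg n m i <;> cases hbj : bdeg n m j <;> simp_all

lemma IsHomog.mul {a b : Bool} {A B : GMat n m} (hA : IsHomog n m a A)
    (hB : IsHomog n m b B) : IsHomog n m (Bool.xor a b) (A * B) := by
  intro i j hij
  rw [Matrix.mul_apply]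
  refine Finset.sum_eq_zero fun k _ => ?_
  by_cases hik : Bool.xor (bdeg n m i) (bdeg n m k) = a
  · have hkj : Bool.xor (bdeg n m k) (bdeg n m j) ≠ b := by
      rintro rfl; apply hij; rw [← hik, Bool.xor_assoc, ← Bool.xor_assoc (bdeg n m k)]; simp
    rw [hB k j hkj, mul_zero]
  · rw [hA i k hik, zero_mul]

lemma IsHomog.sub {a : Bool} {A B : GMat n m} (hA : IsHomog n m a A)
    (hB : IsHomog n m a B) : IsHomog n m a (A - B) := by
  intro i j hij
  simp [hA i j hij, hB i j hij]

lemma IsHomog.smul {a : Bool} {A : GMat n m} (c : ℂ) (hA : IsHomog n m a A) :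
    IsHomog n m a (c • A) := by
  intro i j hij
  simp [hA i j hij]

lemma IsHomog.apply_self {A : GMat n m} (hA : IsHomog n m true A) (i : Fin (n + m)) :
    A i i = 0 :=
  hA i i (by simp)

lemma isHomog_single_self (i : Fin (n + m)) (c : ℂ) :
    IsHomog n m false (Matrix.single i i c) := by
  intro p q hpq
  apply Matrix.single_apply_of_ne
  rintro ⟨rfl, rfl⟩
  simp at hpq

lemma isGDer_gad {a : Bool} {E : GMat n m} (hE : IsHomog n m a E) :
    IsGDer n m a (gad n m a E) := by
  refine ⟨fun A B => ?_, fun c A => ?_, fun b M hM => ?_, fun b M M' hM => ?_⟩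
  · simp only [gad, Matrix.mul_add, Matrix.add_mul]
    split <;> abel
  · simp only [gad, Matrix.mul_smul, Matrix.smul_mul, smul_sub]
    split <;> rfl
  · have hME : IsHomog n m (Bool.xor a b) (M * E) := by
      simpa only [Bool.xor_comm] using hM.mul hE
    rw [Bool.xor_comm]
    cases a
    · exact (hE.mul hM).sub hME
    · simp only [gad, if_true, hM.Gamma_conj, Matrix.smul_mul]
      exact (hE.mul hM).sub (hME.smul _)
  · cases a
    · simp only [gad, Bool.false_eq_true, if_false, sgn, Bool.false_and, one_smul]
      noncomm_ring
    · simp only [gad, if_true, Gamma_mul_mul_Gamma, hM.Gamma_conj, Matrix.smul_mul]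
      cases b <;> simp [sgn] <;> noncomm_ring

lemma gad_true_single_apply (E : GMat n m) {i j : Fin (n + m)} (hij : i ≠ j) :
    gad n m true E (Matrix.single j j 1) i j = E i j := by
  rw [gad, if_pos rfl, (isHomog_single_self j 1).Gamma_conj]
  simp [Matrix.sub_apply, hij]

lemma gad_true_injOn : Set.InjOn (gad n m true) {E | IsHomog n m true E} := by
  intro E (hE : IsHomog n m true E) F (hF : IsHomog n m true F) h
  ext i j
  by_cases hij : i = j
  · subst hij; rw [hE.apply_self, hF.apply_self]
  · rw [← gad_true_single_apply E hij, ← gad_true_single_apply F hij, h]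

lemma adFull_zero : adFull n m 0 = 0 := by
  funext M
  simp [adFull, evp, odp, gad]

lemma adFull_smul_one (c : ℂ) : adFull n m (c • 1) = 0 := by
  have hΓ : Gamma n m * (c • 1) * Gamma n m = c • 1 := by
    rw [Matrix.mul_smul, Matrix.smul_mul, mul_one, Gamma_mul_self]
  funext M
  simp only [adFull, evp, odp, hΓ, sub_self, smul_zero, ← two_smul ℂ (c • (1 : GMat n m)),
    smul_smul]
  simp [gad]

lemma isHomog_reindex_fromBlocks_offDiag (B : Matrix (Fin n) (Fin m) ℂ)
    (C : Matrix (Fin m) (Fin n) ℂ) :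
    IsHomog n m true (Matrix.reindex finSumFinEquiv finSumFinEquiv (Matrix.fromBlocks 0 B C 0)) := by
  intro i j
  refine Fin.addCases (fun i => ?_) (fun i => ?_) i <;>
    refine Fin.addCases (fun j => ?_) (fun j => ?_) j <;>
    simp [bdeg_castAdd, bdeg_natAdd]

def oddInvolution (n : ℕ) : GMat n n :=
  Matrix.reindexAlgEquiv ℂ ℂ finSumFinEquiv (Matrix.fromBlocks 0 1 1 0)

lemma isHomog_oddInvolution : IsHomog n n true (oddInvolution n) :=
  isHomog_reindex_fromBlocks_offDiag 1 1

lemma oddInvolution_mul_self : oddInvolution n * oddInvolution n = 1 := by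
  rw [oddInvolution, ← map_mul, Matrix.fromBlocks_multiply]
  simp

end GMat

/-- For `n = m` there is no Lie subsuperalgebra `L` of `gl(n|n)` such that the
restriction of `ad` to `L` is a Lie superalgebra isomorphism onto the graded
derivations of `M(n|n)`. -/
theorem no_subsuperalgebra_ad_iso (n : ℕ) (hn : 0 < n) :
    ¬ ∃ S : Set (GMat n n),
      (0 ∈ S) ∧
      (∀ A ∈ S, ∀ B ∈ S, A + B ∈ S) ∧
      (∀ (c : ℂ), ∀ A ∈ S, c • A ∈ S) ∧
      (∀ A ∈ S, GMat.evp n n A ∈ S) ∧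
      (∀ (a b : Bool), ∀ A ∈ S, ∀ B ∈ S, GMat.IsHomog n n a A →
        GMat.IsHomog n n b B → GMat.gcomm a b A B ∈ S) ∧
      (∀ A ∈ S, ∀ B ∈ S, GMat.adFull n n A = GMat.adFull n n B → A = B) ∧
      (∀ (ε : Bool) (D : GMat n n → GMat n n), GMat.IsGDer n n ε D →
        ∃ E ∈ S, GMat.IsHomog n n ε E ∧ D = GMat.gad n n ε E) := by
  rintro ⟨S, h0, -, -, -, hGcomm, hInj, hSur⟩
  obtain ⟨E, hES, hEodd, hE⟩ := hSur true _ (GMat.isGDer_gad GMat.isHomog_oddInvolution)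
  have hEJ : E = GMat.oddInvolution n :=
    GMat.gad_true_injOn hEodd GMat.isHomog_oddInvolution hE.symm
  have hcomm : GMat.gcomm true true E E = (2 : ℂ) • 1 := by
    rw [GMat.gcomm, hEJ, GMat.oddInvolution_mul_self, GMat.sgn]
    norm_num [two_smul]
  have h2 := hInj _ (hcomm ▸ hGcomm true true E hES E hES hEodd hEodd) 0 h0
    (by rw [GMat.adFull_smul_one, GMat.adFull_zero])
  have : Nonempty (Fin (n + n)) := ⟨⟨0, by omega⟩⟩
  exact smul_ne_zero two_ne_zero one_ne_zero h2
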